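/- (Final inequality in the proof of Proposition 3.6.) Assume H ∈ C²(𝕏, ℝ), 𝕐 := H_x(𝕏) is open, H_x : 𝕏 → 𝕐 is a C¹-diffeomorphism, S(x) = eᵀx with e ∈ ℝⁿ \ {0}, and V := ⋂_{k=1}^N (J_k e)^⊥ satisfies V ∩ 𝕐 ≠ ∅. Then 𝒯 = H_x⁻¹(V ∩ 𝕐), and for every compact set K ⊆ 𝕏 there exists c > 0 such that for all x ∈ K: dist(x, 𝒯) ≤ c · Σ_{k=1}^N |{S,H}_{J_k}(x)| = c · Σ_{k=1}^N |H_x(x)ᵀ J_k e|. -/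

import Mathlib

open Set Matrix Metric

/-- Matrix–vector multiplication on Euclidean space. -/
noncomputable def mv {a b : ℕ} (A : Matrix (Fin a) (Fin b) ℝ)
    (x : EuclideanSpace ℝ (Fin b)) : EuclideanSpace ℝ (Fin a) :=
  Matrix.toEuclideanLin A x

/-! The brackets `{S,H}_{J_k}(x) = ⟪e, J_k H_x(x)⟫` are the coordinates of a linear map `L`
evaluated at `y = H_x(x)`, and skew-symmetry of the `J_k` identifies `ker L` with `V`, so that
`𝒯 = H_x⁻¹(V)`. Applying the open mapping theorem to `L` onto its (finite-dimensional) range, every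
`y` lies within `C ‖L y‖` of `ker L`. If `x ∈ K` has small brackets, that point of `ker L` lies in a
fixed compact neighbourhood of `H_x(K)` inside `𝕐`, on which the C¹ inverse of `H_x` is Lipschitz;
pulling it back gives a point of `𝒯` within `M C ‖L y‖` of `x`. At the remaining points of `K` the
brackets are bounded below, while `dist(·, 𝒯)` is bounded above on `K`. -/

lemma inner_mv_of_transpose_eq_neg {n : ℕ} {A : Matrix (Fin n) (Fin n) ℝ} (hA : Aᵀ = -A)
    (u w : EuclideanSpace ℝ (Fin n)) :
    (inner ℝ u (mv A w) : ℝ) = -(inner ℝ w (mv A u) : ℝ) := by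
  have hdot : ∀ a b : EuclideanSpace ℝ (Fin n), (inner ℝ a (mv A b) : ℝ) = a ⬝ᵥ (A *ᵥ b) :=
    fun a b => dotProduct_comm _ _
  rw [hdot, hdot, dotProduct_mulVec, ← mulVec_transpose, hA, neg_mulVec, neg_dotProduct,
    dotProduct_comm]

lemma pi_norm_le_sum_norm {ι : Type*} [Fintype ι] {E : ι → Type*}
    [∀ i, SeminormedAddCommGroup (E i)] (x : ∀ i, E i) : ‖x‖ ≤ ∑ i, ‖x i‖ :=
  (pi_norm_le_iff_of_nonneg (by positivity)).2 fun i =>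
    Finset.single_le_sum (fun j _ => norm_nonneg (x j)) (Finset.mem_univ i)

theorem ContinuousLinearMap.exists_mem_ker_dist_le {𝕜 E F : Type*}
    [NontriviallyNormedField 𝕜] [CompleteSpace 𝕜]
    [NormedAddCommGroup E] [NormedSpace 𝕜 E] [CompleteSpace E]
    [NormedAddCommGroup F] [NormedSpace 𝕜 F] [FiniteDimensional 𝕜 F] (f : E →L[𝕜] F) :
    ∃ C > 0, ∀ y, ∃ z, f z = 0 ∧ dist y z ≤ C * ‖f y‖ := by
  have := FiniteDimensional.complete 𝕜 (LinearMap.range (f : E →ₗ[𝕜] F))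
  obtain ⟨C, hC, hpre⟩ := f.rangeRestrict.exists_preimage_norm_le f.surjective_rangeRestrict
  refine ⟨C, hC, fun y => ?_⟩
  obtain ⟨x, hxy, hx⟩ := hpre (f.rangeRestrict y)
  refine ⟨y - x, ?_, ?_⟩
  · rw [map_sub, sub_eq_zero]
    exact (congrArg Subtype.val hxy).symm
  · rw [dist_eq_norm, sub_sub_cancel]
    exact hx

theorem ContDiffOn.exists_lipschitzOnWith_cthickening {E F : Type*}
    [NormedAddCommGroup E] [NormedSpace ℝ E] [ProperSpace E]
    [NormedAddCommGroup F] [NormedSpace ℝ F] {f : E → F} {U K : Set E}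
    (hf : ContDiffOn ℝ 1 f U) (hU : IsOpen U) (hK : IsCompact K) (hKU : K ⊆ U) :
    ∃ r > 0, cthickening r K ⊆ U ∧ ∃ M, LipschitzOnWith M f (cthickening r K) := by
  obtain ⟨r, hr, hrU⟩ := hK.exists_cthickening_subset_open hU hKU
  have hloc : LocallyLipschitzOn U f := fun x hx => by
    obtain ⟨M, t, ht, hM⟩ := (hf.contDiffAt (hU.mem_nhds hx)).exists_lipschitzOnWith
    exact ⟨M, t, mem_nhdsWithin_of_mem_nhds ht, hM⟩
  exact ⟨r, hr, hrU, (hloc.mono hrU).exists_lipschitzOnWith_of_compact hK.cthickening⟩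

theorem IsCompact.exists_infDist_le_mul_of_small {α : Type*} [PseudoMetricSpace α] {K : Set α}
    (hK : IsCompact K) (T : Set α) {φ : α → ℝ} (hφ : ∀ x ∈ K, 0 ≤ φ x) {ε a : ℝ} (hε : 0 < ε)
    (hsmall : ∀ x ∈ K, φ x ≤ ε → infDist x T ≤ a * φ x) :
    ∃ c > 0, ∀ x ∈ K, infDist x T ≤ c * φ x := by
  obtain ⟨D, hD⟩ := hK.exists_bound_of_continuousOn (continuous_infDist_pt T).continuousOn
  refine ⟨max (max a (D / ε)) 1, by positivity, fun x hx => ?_⟩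
  rcases le_or_gt (φ x) ε with hxε | hxε
  · exact (hsmall x hx hxε).trans
      (by gcongr; exacts [hφ x hx, (le_max_left _ _).trans (le_max_left _ _)])
  · have hxD : infDist x T ≤ D := (le_abs_self _).trans (hD x hx)
    have hD0 : 0 ≤ D / ε := div_nonneg (infDist_nonneg.trans hxD) hε.le
    calc infDist x T ≤ D / ε * ε := by rwa [div_mul_cancel₀ _ hε.ne']
      _ ≤ D / ε * φ x := by gcongr
      _ ≤ _ := by gcongr; exacts [hφ x hx, (le_max_right _ _).trans (le_max_left _ _)]

/-- `bracketMap e J (H_x x) = ({S,H}_{J_k}(x))_k` for `S = ⟪e, ·⟫`. -/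
noncomputable def bracketMap {n N : ℕ} (e : EuclideanSpace ℝ (Fin n))
    (J : Fin N → Matrix (Fin n) (Fin n) ℝ) : EuclideanSpace ℝ (Fin n) →L[ℝ] (Fin N → ℝ) :=
  LinearMap.toContinuousLinearMap
    (LinearMap.pi fun k => (innerₛₗ ℝ e).comp (Matrix.toEuclideanLin (J k)))

@[simp]
lemma bracketMap_apply {n N : ℕ} (e : EuclideanSpace ℝ (Fin n))
    (J : Fin N → Matrix (Fin n) (Fin n) ℝ) (y : EuclideanSpace ℝ (Fin n)) (k : Fin N) :
    bracketMap e J y k = (inner ℝ e (mv (J k) y) : ℝ) :=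
  rfl

lemma bracketMap_eq_zero_iff {n N : ℕ} {e : EuclideanSpace ℝ (Fin n)}
    {J : Fin N → Matrix (Fin n) (Fin n) ℝ} (hJ : ∀ k, (J k)ᵀ = -(J k))
    (y : EuclideanSpace ℝ (Fin n)) :
    bracketMap e J y = 0 ↔ ∀ k, (inner ℝ y (mv (J k) e) : ℝ) = 0 := by
  simp [funext_iff, inner_mv_of_transpose_eq_neg (hJ _) e]

theorem dist_to_equilibria_le_sum_abs_brackets_general
    (n N : ℕ)
    (X : Set (EuclideanSpace ℝ (Fin n)))
    (Hx : EuclideanSpace ℝ (Fin n) → EuclideanSpace ℝ (Fin n))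
    (Hxx : EuclideanSpace ℝ (Fin n) → Matrix (Fin n) (Fin n) ℝ)
    (hHx : ∀ p ∈ X,
      HasFDerivAt Hx (LinearMap.toContinuousLinearMap (Matrix.toEuclideanLin (Hxx p))) p)
    -- 𝕐 = H_x(𝕏) is open and H_x : 𝕏 → 𝕐 is a C¹-diffeomorphism with inverse Hinv
    (hYopen : IsOpen (Hx '' X))
    (Hinv : EuclideanSpace ℝ (Fin n) → EuclideanSpace ℝ (Fin n))
    (hHinvleft : ∀ p ∈ X, Hinv (Hx p) = p)
    (hHinvC1 : ContDiffOn ℝ 1 Hinv (Hx '' X))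
    -- entropy S(x) = eᵀ x, e ≠ 0
    (e : EuclideanSpace ℝ (Fin n))
    -- skew-symmetric structure matrices
    (J : Fin N → Matrix (Fin n) (Fin n) ℝ)
    (hJskew : ∀ k, (J k)ᵀ = -(J k))
    -- V = ⋂_k (J_k e)^⊥ meets 𝕐
    (V : Set (EuclideanSpace ℝ (Fin n)))
    (hV : V = {y : EuclideanSpace ℝ (Fin n) | ∀ k, (inner ℝ y (mv (J k) e) : ℝ) = 0})
    -- the set of thermodynamic equilibria
    (T : Set (EuclideanSpace ℝ (Fin n)))
    (hT : T = {p ∈ X | ∀ k, (inner ℝ e (mv (J k) (Hx p)) : ℝ) = 0}) :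
    -- 𝒯 = H_x⁻¹(V ∩ 𝕐)
    T = Hx ⁻¹' (V ∩ (Hx '' X)) ∩ X
    -- dist(x,𝒯) ≤ c Σ_k |{S,H}_{J_k}(x)| = c Σ_k |H_x(x)ᵀ J_k e| on compacts
    ∧ ∀ K ⊆ X, IsCompact K → ∃ c > (0:ℝ), ∀ x ∈ K,
        infDist x T ≤ c * ∑ k, |(inner ℝ e (mv (J k) (Hx x)) : ℝ)|
        ∧ c * ∑ k, |(inner ℝ e (mv (J k) (Hx x)) : ℝ)|
            = c * ∑ k, |(inner ℝ (Hx x) (mv (J k) e) : ℝ)| := by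
  have hTker : T = {p ∈ X | bracketMap e J (Hx p) = 0} := by
    simp only [hT, funext_iff, bracketMap_apply, Pi.zero_apply]
  have hVker : V = {y | bracketMap e J y = 0} := by
    simp only [hV, bracketMap_eq_zero_iff hJskew]
  refine ⟨by rw [hTker, hVker]; ext p; aesop, fun K hKX hK => ?_⟩
  set φ := fun x => ∑ k, |(inner ℝ e (mv (J k) (Hx x)) : ℝ)|
  obtain ⟨C, hC, hker⟩ := (bracketMap e J).exists_mem_ker_dist_le
  have hKY : IsCompact (Hx '' K) :=
    hK.image_of_continuousOn fun p hp => (hHx p (hKX hp)).continuousAt.continuousWithinAt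
  obtain ⟨r, hr, hrY, M, hM⟩ :=
    hHinvC1.exists_lipschitzOnWith_cthickening hYopen hKY (image_mono hKX)
  have hlocal : ∀ x ∈ K, φ x ≤ r / C → infDist x T ≤ M * C * φ x := by
    intro x hxK hsmall
    have hxK' : Hx x ∈ Hx '' K := mem_image_of_mem Hx hxK
    obtain ⟨z, hz, hxz⟩ := hker (Hx x)
    have hxz' : dist (Hx x) z ≤ C * φ x :=
      hxz.trans (by gcongr; exact (pi_norm_le_sum_norm _).trans_eq (by simp [φ]))
    have hzK : z ∈ cthickening r (Hx '' K) := closedBall_subset_cthickening hxK' r <| by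
      rw [mem_closedBall, dist_comm]
      exact hxz'.trans (by rwa [le_div_iff₀' hC] at hsmall)
    obtain ⟨p, hpX, rfl⟩ := hrY hzK
    calc infDist x T ≤ dist x p := infDist_le_dist_of_mem (by rw [hTker]; exact ⟨hpX, hz⟩)
      _ = dist (Hinv (Hx x)) (Hinv (Hx p)) := by rw [hHinvleft x (hKX hxK), hHinvleft p hpX]
      _ ≤ M * dist (Hx x) (Hx p) := hM.dist_le_mul _ (self_subset_cthickening _ hxK') _ hzK
      _ ≤ M * C * φ x := by rw [mul_assoc]; gcongr
  obtain ⟨c, hc, hcK⟩ :=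
    hK.exists_infDist_le_mul_of_small T (fun _ _ => by positivity) (div_pos hr hC) hlocal
  refine ⟨c, hc, fun x hx => ⟨hcK x hx, ?_⟩⟩
  simp_rw [inner_mv_of_transpose_eq_neg (hJskew _) e, abs_neg]

/-- Final inequality in the proof of Proposition 3.6: with `H_x : 𝕏 → 𝕐` a
C¹-diffeomorphism, `S(x) = eᵀx`, `e ≠ 0`, and `V = ⋂_k (J_k e)^⊥` meeting `𝕐`, one has
`𝒯 = H_x⁻¹(V ∩ 𝕐)` and, on every compact `K ⊆ 𝕏`,
`dist(x,𝒯) ≤ c Σ_k |{S,H}_{J_k}(x)| = c Σ_k |H_x(x)ᵀ J_k e|`. -/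
theorem dist_to_equilibria_le_sum_abs_brackets
    (n N : ℕ)
    (X : Set (EuclideanSpace ℝ (Fin n))) (hXopen : IsOpen X)
    (H : EuclideanSpace ℝ (Fin n) → ℝ)
    (Hx : EuclideanSpace ℝ (Fin n) → EuclideanSpace ℝ (Fin n))
    (Hxx : EuclideanSpace ℝ (Fin n) → Matrix (Fin n) (Fin n) ℝ)
    (hH : ∀ p ∈ X, HasGradientAt H (Hx p) p)
    (hHx : ∀ p ∈ X,
      HasFDerivAt Hx (LinearMap.toContinuousLinearMap (Matrix.toEuclideanLin (Hxx p))) p)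
    (hHxxcont : ContinuousOn Hxx X)
    -- 𝕐 = H_x(𝕏) is open and H_x : 𝕏 → 𝕐 is a C¹-diffeomorphism with inverse Hinv
    (hYopen : IsOpen (Hx '' X))
    (Hinv : EuclideanSpace ℝ (Fin n) → EuclideanSpace ℝ (Fin n))
    (hHinvmaps : ∀ y ∈ Hx '' X, Hinv y ∈ X)
    (hHinvleft : ∀ p ∈ X, Hinv (Hx p) = p)
    (hHinvC1 : ContDiffOn ℝ 1 Hinv (Hx '' X))
    -- entropy S(x) = eᵀ x, e ≠ 0
    (e : EuclideanSpace ℝ (Fin n)) (he : e ≠ 0)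
    -- skew-symmetric structure matrices
    (J : Fin N → Matrix (Fin n) (Fin n) ℝ)
    (hJskew : ∀ k, (J k)ᵀ = -(J k))
    -- V = ⋂_k (J_k e)^⊥ meets 𝕐
    (V : Set (EuclideanSpace ℝ (Fin n)))
    (hV : V = {y : EuclideanSpace ℝ (Fin n) | ∀ k, (inner ℝ y (mv (J k) e) : ℝ) = 0})
    (hVY : (V ∩ (Hx '' X)).Nonempty)
    -- the set of thermodynamic equilibria
    (T : Set (EuclideanSpace ℝ (Fin n)))
    (hT : T = {p ∈ X | ∀ k, (inner ℝ e (mv (J k) (Hx p)) : ℝ) = 0}) :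
    -- 𝒯 = H_x⁻¹(V ∩ 𝕐)
    T = Hx ⁻¹' (V ∩ (Hx '' X)) ∩ X
    -- dist(x,𝒯) ≤ c Σ_k |{S,H}_{J_k}(x)| = c Σ_k |H_x(x)ᵀ J_k e| on compacts
    ∧ ∀ K ⊆ X, IsCompact K → ∃ c > (0:ℝ), ∀ x ∈ K,
        infDist x T ≤ c * ∑ k, |(inner ℝ e (mv (J k) (Hx x)) : ℝ)|
        ∧ c * ∑ k, |(inner ℝ e (mv (J k) (Hx x)) : ℝ)|
            = c * ∑ k, |(inner ℝ (Hx x) (mv (J k) e) : ℝ)| :=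
  dist_to_equilibria_le_sum_abs_brackets_general n N X Hx Hxx hHx hYopen Hinv hHinvleft hHinvC1 e J
    hJskew V hV T hT
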